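/- arXiv:1812.06305 — 3 statements merged into one kernel-verified Lean document; each statement's English description precedes it below -/
import Mathlib

section
/- Let M ≥ 2 be a natural number, p ∈ (0,1], and let (β_n) be the sequence defined by β_0 = 1 and β_n = M p β_{n-1} - (M-1) p^{2n} for n ≥ 1. Then for all n ≥ 0, β_n = (Mp)^n (1 - ((M-1)p/(M-p)) (1 - (p/M)^n)). -/
noncomputable def eulerCharClosedForm (m p : ℝ) (n : ℕ) : ℝ :=
  (m * p) ^ n * (1 - ((m - 1) * p / (m - p)) * (1 - (p / m) ^ n))

-- The inhomogeneous term is `(m p)^n (p / m)^n = p^(2n)` times a constant, which is why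
-- a geometric correction in `p / m` absorbs it.
theorem eulerCharClosedForm_succ {m p : ℝ} (hm : m ≠ 0) (hmp : m - p ≠ 0) (n : ℕ) :
    eulerCharClosedForm m p (n + 1) =
      m * p * eulerCharClosedForm m p n - (m - 1) * p ^ (2 * (n + 1)) := by
  unfold eulerCharClosedForm
  simp only [div_pow]
  field_simp
  ring

theorem eq_eulerCharClosedForm {m p : ℝ} (hm : m ≠ 0) (hmp : m - p ≠ 0) {β : ℕ → ℝ}
    (h0 : β 0 = 1)
    (hsucc : ∀ n : ℕ, β (n + 1) = m * p * β n - (m - 1) * p ^ (2 * (n + 1))) (n : ℕ) :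
    β n = eulerCharClosedForm m p n := by
  induction n with
  | zero => simp [h0, eulerCharClosedForm]
  | succ n ih => rw [hsucc, ih, eulerCharClosedForm_succ hm hmp]

theorem stmt2_general (M : ℕ) (hM : 2 ≤ M) (p : ℝ) (hp1 : p ≤ 1)
    (β : ℕ → ℝ) (h0 : β 0 = 1)
    (hrec : ∀ n : ℕ, 1 ≤ n → β n = (M:ℝ) * p * β (n-1) - ((M:ℝ)-1) * p^(2*n)) :
    ∀ n : ℕ, β n = ((M:ℝ)*p)^n *
      (1 - (((M:ℝ)-1)*p/((M:ℝ)-p)) * (1 - (p/(M:ℝ))^n)) := by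
  have hM2 : (2:ℝ) ≤ M := by exact_mod_cast hM
  exact eq_eulerCharClosedForm (by linarith) (by linarith) h0
    (fun n => hrec (n + 1) n.succ_pos)

theorem stmt2 (M : ℕ) (hM : 2 ≤ M) (p : ℝ) (hp : 0 < p) (hp1 : p ≤ 1)
    (β : ℕ → ℝ) (h0 : β 0 = 1)
    (hrec : ∀ n : ℕ, 1 ≤ n → β n = (M:ℝ) * p * β (n-1) - ((M:ℝ)-1) * p^(2*n)) :
    ∀ n : ℕ, β n = ((M:ℝ)*p)^n *
      (1 - (((M:ℝ)-1)*p/((M:ℝ)-p)) * (1 - (p/(M:ℝ))^n)) :=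
  stmt2_general M hM p hp1 β h0 hrec
end

section
/- Let M ≥ 2 be a natural number, p ∈ (0,1], and define p_0(j) = (M-1)(2p^{2j} - 4p^{3j} + p^{4j}). Let (β_n) satisfy β_0 = 1 and β_n = M p^2 β_{n-1} + p_0(n) for n ≥ 1. Then for all n ≥ 0, β_n = (Mp^2)^n ( 3 - 2 M^{-n} - 4p ((M-1)/(M-p)) (1 - (p/M)^n) + ((M-1)p^2/(M-p^2)) (1 - (p^2/M)^n) ). -/
/-!
The right-hand side satisfies the same first-order recurrence as `β` and has the value `1`
at `n = 0`, so the two sequences agree by induction. Dividing by `(M p²)ⁿ`, the recurrence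
adds the three geometric terms `(p / M)ⁿ`, `(p² / M)ⁿ` and `M⁻ⁿ` coming from `p^(3n)`,
`p^(4n)` and `p^(2n)`, whose partial sums give the closed form.
-/

noncomputable def betaClosedForm (M p : ℝ) (n : ℕ) : ℝ :=
  (M * p ^ 2) ^ n *
    (3 - 2 * (M ^ n)⁻¹
      - 4 * p * ((M - 1) / (M - p)) * (1 - (p / M) ^ n)
      + ((M - 1) * p ^ 2 / (M - p ^ 2)) * (1 - (p ^ 2 / M) ^ n))

theorem betaClosedForm_zero (M p : ℝ) : betaClosedForm M p 0 = 1 := by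
  norm_num [betaClosedForm]

theorem betaClosedForm_succ {M p : ℝ} (hM : M ≠ 0) (hMp : M - p ≠ 0) (hMp2 : M - p ^ 2 ≠ 0)
    (n : ℕ) :
    betaClosedForm M p (n + 1) = M * p ^ 2 * betaClosedForm M p n
      + (M - 1) * (2 * p ^ (2 * (n + 1)) - 4 * p ^ (3 * (n + 1)) + p ^ (4 * (n + 1))) := by
  simp only [betaClosedForm, div_pow]
  field_simp
  ring

theorem stmt4 (M : ℕ) (hM : 2 ≤ M) (p : ℝ) (hp : 0 < p) (hp1 : p ≤ 1)
    (β : ℕ → ℝ) (h0 : β 0 = 1)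
    (hrec : ∀ n : ℕ, 1 ≤ n →
      β n = (M:ℝ) * p^2 * β (n-1) + ((M:ℝ)-1) * (2*p^(2*n) - 4*p^(3*n) + p^(4*n))) :
    ∀ n : ℕ, β n = ((M:ℝ)*p^2)^n *
      (3 - 2 * ((M:ℝ)^n)⁻¹
        - 4*p * (((M:ℝ)-1)/((M:ℝ)-p)) * (1 - (p/(M:ℝ))^n)
        + (((M:ℝ)-1)*p^2/((M:ℝ)-p^2)) * (1 - (p^2/(M:ℝ))^n)) := by
  have hM2 : (2 : ℝ) ≤ M := by exact_mod_cast hM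
  have hMp : (M : ℝ) - p ≠ 0 := by linarith
  have hMp2 : (M : ℝ) - p ^ 2 ≠ 0 := by nlinarith
  intro n
  change β n = betaClosedForm M p n
  induction n with
  | zero => rw [h0, betaClosedForm_zero]
  | succ n ih =>
    rw [hrec (n + 1) n.succ_pos, Nat.add_sub_cancel, ih,
      betaClosedForm_succ (by positivity) hMp hMp2]
end

section
/- Let M ≥ 2 be a natural number and p with 1/M^2 < p < 1. The constant c = (2p(M-1)^2/(M-p)) (3/(M-1) - 4p/(M-p) + p^2/(M-p^2)) is strictly positive. -/
theorem stmt18 (M : ℕ) (hM : 2 ≤ M) (p : ℝ) (hp : 1/(M:ℝ)^2 < p) (hp1 : p < 1) :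
    0 < (2*p*((M:ℝ)-1)^2/((M:ℝ)-p)) *
      (3/((M:ℝ)-1) - 4*p/((M:ℝ)-p) + p^2/((M:ℝ)-p^2)) := by
  have hm : (2:ℝ) ≤ (M:ℝ) := by exact_mod_cast hM
  have hp0 : 0 < p := lt_trans (by positivity) hp
  have h1 : (0:ℝ) < (M:ℝ) - 1 := by linarith
  have h2 : (0:ℝ) < (M:ℝ) - p := by linarith
  have h3 : (0:ℝ) < (M:ℝ) - p^2 := by nlinarith
  have hA : 0 < 2*p*((M:ℝ)-1)^2/((M:ℝ)-p) := by positivity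
  have hB : 0 < 3/((M:ℝ)-1) - 4*p/((M:ℝ)-p) + p^2/((M:ℝ)-p^2) := by
    have heq : 3/((M:ℝ)-1) - 4*p/((M:ℝ)-p) + p^2/((M:ℝ)-p^2)
        = ((1-p)*(M:ℝ)*((M:ℝ)*(3-p)+p*(1-3*p)))/(((M:ℝ)-1)*((M:ℝ)-p)*((M:ℝ)-p^2)) := by
      field_simp
      ring
    rw [heq]
    apply div_pos
    · have h4 : 0 < (M:ℝ)*(3-p)+p*(1-3*p) := by nlinarith
      have h5 : 0 < (1-p) := by linarith
      positivity
    · positivity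
  exact mul_pos hA hB
end
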